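/- arXiv:math/0411457 — 3 statements merged into one kernel-verified Lean document; each statement's English description precedes it below -/
import Mathlib

section
/- Weighted Euler–Maclaurin with remainder for intervals: Let q ∈ ℂ, let a < b be integers, let m > 1 be an integer, set k = ⌊m/2⌋, and let f : ℝ → ℂ be of class C^m. Then Σ^q_{[a,b]} f = χ_q^{2k}(∂/∂h₁) χ_q^{2k}(∂/∂h₂) F(h₁,h₂) |_{h₁=h₂=0} + R_m^{[a,b]}(f), where F(h₁,h₂) = ∫_{a−h₁}^{b+h₂} f(x) dx. -/
open scoped BigOperators Classical
open MeasureTheory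

/-- Coefficients of the Todd power series `Td(S) = S/(1-e^{-S}) = ∑ bernoulli' n · Sⁿ/n!`. -/
noncomputable def toddCoeff (j : ℕ) : ℂ := (bernoulli' j : ℂ) / j.factorial

/-- Coefficients of the Hirzebruch power series `χ_q(S) = q·Td(S) + (1-q)·Td(-S)`. -/
noncomputable def chiCoeff (q : ℂ) (j : ℕ) : ℂ :=
  q * toddCoeff j + (1 - q) * (-1) ^ j * toddCoeff j

/-- `P_m(x) = B_m({x})/m!`, where `B_m` is the m-th Bernoulli polynomial and `{x}`
is the fractional part of `x`. -/
noncomputable def periodicBernoulli (m : ℕ) (x : ℝ) : ℂ :=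
  Polynomial.aeval ((Int.fract x : ℝ) : ℂ) (Polynomial.bernoulli m) / m.factorial

/-- The `m`-th Bernoulli polynomial with complex coefficients. -/
noncomputable def Bc (m : ℕ) : Polynomial ℂ := (Polynomial.bernoulli m).map (algebraMap ℚ ℂ)

/-- `B_m(x - c)/m!` as a smooth function of a real variable. -/
noncomputable def Qf (m : ℕ) (c : ℝ) (x : ℝ) : ℂ := (Bc m).eval ((x : ℂ) - c) / m.factorial

lemma Bc_derivative (m : ℕ) :
    (Bc (m + 1)).derivative = Polynomial.C ((m : ℂ) + 1) * Bc m := by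
  unfold Bc
  rw [Polynomial.derivative_map, Polynomial.derivative_bernoulli_add_one, Polynomial.map_mul]
  congr 1
  push_cast
  simp [Polynomial.map_natCast]

lemma continuous_Qf (m : ℕ) (c : ℝ) : Continuous (Qf m c) := by
  unfold Qf
  exact (((Bc m).continuous.comp (Complex.continuous_ofReal.sub continuous_const))).div_const _

lemma hasDerivAt_Qf (m : ℕ) (c x : ℝ) : HasDerivAt (Qf (m + 1) c) (Qf m c x) x := by
  have h1 : HasDerivAt (fun z : ℂ => (Bc (m + 1)).eval (z - c))
      ((Bc (m + 1)).derivative.eval ((x : ℂ) - c)) (x : ℂ) := by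
    have := ((Bc (m+1)).hasDerivAt ((x : ℂ) - c)).comp (x : ℂ)
      ((hasDerivAt_id (x : ℂ)).sub_const (c : ℂ))
    simpa [Function.comp_def] using this
  have h2 := (h1.comp_ofReal).div_const ((m + 1).factorial : ℂ)
  refine h2.congr_deriv ?_
  rw [Bc_derivative]
  unfold Qf
  simp only [Polynomial.eval_mul, Polynomial.eval_C]
  rw [Nat.factorial_succ]
  push_cast
  have hm : ((m : ℂ) + 1) ≠ 0 := Nat.cast_add_one_ne_zero m
  have hf : ((m.factorial : ℂ)) ≠ 0 := by exact_mod_cast Nat.cast_ne_zero.2 m.factorial_ne_zero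
  field_simp

lemma periodicBernoulli_eq_Qf (m : ℕ) (n : ℤ) {x : ℝ} (hx : x ∈ Set.Ico (n : ℝ) ((n : ℝ) + 1)) :
    periodicBernoulli m x = Qf m (n : ℝ) x := by
  have hfl : ⌊x⌋ = n := by
    rw [Int.floor_eq_iff]
    · exact ⟨hx.1, by exact_mod_cast hx.2⟩
  have hfr : Int.fract x = x - n := by rw [Int.fract, hfl]
  unfold periodicBernoulli Qf Bc
  rw [hfr, Polynomial.aeval_def, ← Polynomial.eval_map]
  push_cast
  ring_nf

lemma Qf_eval_right (m : ℕ) (c : ℝ) :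
    Qf (m + 1) c (c + 1) = ((bernoulli' (m + 1) : ℚ) : ℂ) / (m + 1).factorial := by
  unfold Qf Bc
  have : ((c + 1 : ℝ) : ℂ) - c = 1 := by push_cast; ring
  rw [this, Polynomial.eval_one_map, Polynomial.bernoulli_eval_one]
  norm_num

lemma Qf_eval_left (m : ℕ) (c : ℝ) :
    Qf (m + 1) c c = ((bernoulli (m + 1) : ℚ) : ℂ) / (m + 1).factorial := by
  unfold Qf Bc
  have : ((c : ℝ) : ℂ) - c = 0 := by push_cast; ring
  rw [this, Polynomial.eval_zero_map, Polynomial.bernoulli_eval_zero]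
  norm_num

lemma ae_eq_on_unit (m : ℕ) (n : ℤ) (g : ℝ → ℂ) :
    ∀ᵐ x : ℝ, x ∈ Set.uIoc (n : ℝ) ((n : ℝ) + 1) →
      periodicBernoulli m x * g x = Qf m (n : ℝ) x * g x := by
  have h1 : ∀ᵐ x : ℝ, x ≠ (n : ℝ) + 1 := by
    rw [MeasureTheory.ae_iff]
    have : {x : ℝ | ¬x ≠ (n : ℝ) + 1} = {((n : ℝ) + 1)} := by ext x; simp
    rw [this]
    exact Real.volume_singleton
  filter_upwards [h1] with x hx hmem
  rw [Set.uIoc_of_le (by linarith)] at hmem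
  rw [periodicBernoulli_eq_Qf m n ⟨le_of_lt hmem.1, lt_of_le_of_ne hmem.2 hx⟩]

lemma integral_periodic_eq (m : ℕ) (n : ℤ) (g : ℝ → ℂ) :
    ∫ x in (n : ℝ)..((n : ℝ) + 1), periodicBernoulli m x * g x
      = ∫ x in (n : ℝ)..((n : ℝ) + 1), Qf m (n : ℝ) x * g x :=
  intervalIntegral.integral_congr_ae (ae_eq_on_unit m n g)

lemma intervalIntegrable_periodic_mul (m : ℕ) (n : ℤ) (g : ℝ → ℂ) (hg : Continuous g) :
    IntervalIntegrable (fun x => periodicBernoulli m x * g x) volume (n : ℝ) ((n : ℝ) + 1) := by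
  have h : IntervalIntegrable (fun x => Qf m (n : ℝ) x * g x) volume (n : ℝ) ((n : ℝ) + 1) :=
    ((continuous_Qf m (n : ℝ)).mul hg).intervalIntegrable (n : ℝ) ((n : ℝ) + 1)
  refine h.congr_ae ?_
  exact (ae_restrict_iff' measurableSet_uIoc).mpr
    ((ae_eq_on_unit m n g).mono fun x h hx => (h hx).symm)

lemma ibp_unit (m : ℕ) (n : ℤ) (g g' : ℝ → ℂ)
    (hg : ∀ x, HasDerivAt g (g' x) x) (hg' : Continuous g') :
    ∫ x in (n : ℝ)..((n : ℝ) + 1), periodicBernoulli (m + 1) x * g' x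
      = ((bernoulli' (m + 1) : ℚ) : ℂ) / (m + 1).factorial * g ((n : ℝ) + 1)
        - ((bernoulli (m + 1) : ℚ) : ℂ) / (m + 1).factorial * g (n : ℝ)
        - ∫ x in (n : ℝ)..((n : ℝ) + 1), periodicBernoulli m x * g x := by
  rw [integral_periodic_eq, integral_periodic_eq]
  have h := intervalIntegral.integral_mul_deriv_eq_deriv_mul (a := (n : ℝ)) (b := (n : ℝ) + 1)
    (u := Qf (m + 1) (n : ℝ)) (u' := Qf m (n : ℝ)) (v := g) (v' := g')
    (fun x _ => hasDerivAt_Qf m (n : ℝ) x) (fun x _ => hg x)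
    ((continuous_Qf m (n : ℝ)).intervalIntegrable (μ := volume) _ _)
    (hg'.intervalIntegrable (μ := volume) _ _)
  rw [h, Qf_eval_right, Qf_eval_left]

lemma integral_eq_sum (a : ℤ) (N : ℕ) (φ : ℝ → ℂ)
    (h : ∀ i : ℕ, i < N → IntervalIntegrable φ volume ((a : ℝ) + i) ((a : ℝ) + i + 1)) :
    ∫ x in (a : ℝ)..((a : ℝ) + N), φ x
      = ∑ i ∈ Finset.range N, ∫ x in ((a : ℝ) + i)..((a : ℝ) + i + 1), φ x := by
  have key := intervalIntegral.sum_integral_adjacent_intervals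
    (μ := volume) (f := φ) (a := fun k : ℕ => (a : ℝ) + k) (n := N)
    (fun k hk => by push_cast; simpa [add_assoc] using h k hk)
  simp only [Nat.cast_zero, add_zero] at key
  rw [← key]
  refine Finset.sum_congr rfl fun i _ => ?_
  push_cast
  ring_nf

lemma summed_ibp (a : ℤ) (N : ℕ) (m : ℕ) (g g' : ℝ → ℂ)
    (hg : ∀ x, HasDerivAt g (g' x) x) (hg' : Continuous g') :
    ∫ x in (a : ℝ)..((a : ℝ) + N), periodicBernoulli (m + 1) x * g' x
      = (∑ i ∈ Finset.range N,
          (((bernoulli' (m + 1) : ℚ) : ℂ) / (m + 1).factorial * g ((a : ℝ) + i + 1)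
            - ((bernoulli (m + 1) : ℚ) : ℂ) / (m + 1).factorial * g ((a : ℝ) + i)))
        - ∫ x in (a : ℝ)..((a : ℝ) + N), periodicBernoulli m x * g x := by
  have hgc : Continuous g := Differentiable.continuous (fun x => (hg x).differentiableAt)
  have hInt1 : ∀ i : ℕ, i < N → IntervalIntegrable
      (fun x => periodicBernoulli (m + 1) x * g' x) volume ((a : ℝ) + i) ((a : ℝ) + i + 1) := by
    intro i _
    have h := intervalIntegrable_periodic_mul (m + 1) (a + i) g' hg'
    push_cast at h
    exact h
  have hInt2 : ∀ i : ℕ, i < N → IntervalIntegrable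
      (fun x => periodicBernoulli m x * g x) volume ((a : ℝ) + i) ((a : ℝ) + i + 1) := by
    intro i _
    have h := intervalIntegrable_periodic_mul m (a + i) g hgc
    push_cast at h
    exact h
  rw [integral_eq_sum a N _ hInt1, integral_eq_sum a N _ hInt2, ← Finset.sum_sub_distrib]
  refine Finset.sum_congr rfl fun i _ => ?_
  have h := ibp_unit m (a + i) g g' hg hg'
  push_cast at h
  exact h

lemma periodicBernoulli_zero_eq (x : ℝ) : periodicBernoulli 0 x = 1 := by
  unfold periodicBernoulli
  simp [Polynomial.bernoulli_zero]

lemma half_sum (N : ℕ) (u : ℕ → ℂ) :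
    ∑ i ∈ Finset.range (N + 1), u i
      = (u 0 + u N) / 2 + ∑ i ∈ Finset.range N, ((1 / 2 : ℂ) * u (i + 1) + (1 / 2) * u i) := by
  induction N with
  | zero => norm_num
  | succ n ih => rw [Finset.sum_range_succ, ih, Finset.sum_range_succ]; ring

lemma tele_sum (N : ℕ) (c : ℂ) (u : ℕ → ℂ) :
    ∑ i ∈ Finset.range N, (c * u (i + 1) - c * u i) = c * u N - c * u 0 :=
  Finset.sum_range_sub (fun i => c * u i) N

lemma em_main (a : ℤ) (N : ℕ) (m : ℕ) (f : ℝ → ℂ) (hf : ContDiff ℝ (m + 1) f) :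
    ∑ i ∈ Finset.range (N + 1), f ((a : ℝ) + i)
      = (∫ x in (a : ℝ)..((a : ℝ) + N), f x)
        + (f (a : ℝ) + f ((a : ℝ) + N)) / 2
        + ∑ j ∈ Finset.Icc 2 (m + 1), ((bernoulli j : ℚ) : ℂ) / j.factorial
            * (iteratedDeriv (j - 1) f ((a : ℝ) + N) - iteratedDeriv (j - 1) f (a : ℝ))
        + (-1) ^ m * ∫ x in (a : ℝ)..((a : ℝ) + N),
            periodicBernoulli (m + 1) x * iteratedDeriv (m + 1) f x := by
  have hcast : ∀ i : ℕ, (a : ℝ) + i + 1 = (a : ℝ) + ((i + 1 : ℕ) : ℝ) := by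
    intro i; push_cast; ring
  induction m with
  | zero =>
    have hd : ∀ x, HasDerivAt f (deriv f x) x := fun x =>
      ((hf.differentiable (by simp)) x).hasDerivAt
    have hdc : Continuous (deriv f) := hf.continuous_deriv (by exact_mod_cast le_refl 1)
    have hS := summed_ibp a N 0 f (deriv f) hd hdc
    rw [iteratedDeriv_one]
    rw [hS]
    have h0 : ∫ x in (a : ℝ)..((a : ℝ) + N), periodicBernoulli 0 x * f x
        = ∫ x in (a : ℝ)..((a : ℝ) + N), f x := by
      refine intervalIntegral.integral_congr fun x _ => ?_
      rw [periodicBernoulli_zero_eq, one_mul]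
    rw [h0]
    have hb' : ((bernoulli' 1 : ℚ) : ℂ) / (Nat.factorial 1) = 1 / 2 := by
      norm_num [bernoulli'_one]
    have hb : ((bernoulli 1 : ℚ) : ℂ) / (Nat.factorial 1) = -(1 / 2) := by
      norm_num [bernoulli_one]
    rw [show Finset.Icc 2 1 = (∅ : Finset ℕ) from rfl, Finset.sum_empty, hb', hb, pow_zero]
    simp_rw [hcast, neg_mul, sub_neg_eq_add]
    rw [half_sum N (fun i => f ((a : ℝ) + (i : ℕ)))]
    simp only [Nat.cast_zero, add_zero]
    ring
  | succ m IH =>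
    have hf' : ContDiff ℝ (m + 1) f := hf.of_le (by exact_mod_cast Nat.le_succ (m + 1))
    have hdg : Differentiable ℝ (iteratedDeriv (m + 1) f) :=
      hf.differentiable_iteratedDeriv (m + 1) (by exact_mod_cast Nat.lt_succ_self (m + 1))
    have hg : ∀ x, HasDerivAt (iteratedDeriv (m + 1) f) (iteratedDeriv (m + 1 + 1) f x) x := by
      intro x
      have h := (hdg x).hasDerivAt
      rwa [show deriv (iteratedDeriv (m + 1) f) x = iteratedDeriv (m + 1 + 1) f x by
        conv_rhs => rw [iteratedDeriv_succ]] at h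
    have hg'c : Continuous (iteratedDeriv (m + 1 + 1) f) :=
      hf.continuous_iteratedDeriv (m + 1 + 1) (by exact_mod_cast le_refl (m + 1 + 1))
    have hS := summed_ibp a N (m + 1) (iteratedDeriv (m + 1) f) (iteratedDeriv (m + 1 + 1) f)
      hg hg'c
    have hbb : ((bernoulli' (m + 1 + 1) : ℚ) : ℂ) = ((bernoulli (m + 1 + 1) : ℚ) : ℂ) := by
      rw [bernoulli_eq_bernoulli'_of_ne_one (by omega)]
    rw [hbb] at hS
    simp_rw [hcast] at hS
    rw [tele_sum N (((bernoulli (m + 1 + 1) : ℚ) : ℂ) / (m + 1 + 1).factorial)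
      (fun i => iteratedDeriv (m + 1) f ((a : ℝ) + (i : ℕ)))] at hS
    simp only [Nat.cast_zero, add_zero] at hS
    have hkey : (-1 : ℂ) ^ m * (∫ x in (a : ℝ)..((a : ℝ) + N),
          periodicBernoulli (m + 1) x * iteratedDeriv (m + 1) f x)
        = ((bernoulli (m + 1 + 1) : ℚ) : ℂ) / (m + 1 + 1).factorial
            * (iteratedDeriv (m + 1) f ((a : ℝ) + N) - iteratedDeriv (m + 1) f (a : ℝ))
          + (-1) ^ (m + 1) * ∫ x in (a : ℝ)..((a : ℝ) + N),
              periodicBernoulli (m + 1 + 1) x * iteratedDeriv (m + 1 + 1) f x := by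
      rcases Nat.even_or_odd m with he | ho
      · rw [pow_succ, he.neg_one_pow, one_mul]
        linear_combination hS
      · have hz : ((bernoulli (m + 1 + 1) : ℚ) : ℂ) = 0 := by
          have h1 : bernoulli' (m + 1 + 1) = 0 :=
            bernoulli'_eq_zero_of_odd (by simpa [Nat.odd_add] using ho) (by omega)
          rw [bernoulli_eq_bernoulli'_of_ne_one (by omega), h1]
          norm_num
        rw [hz] at hS ⊢
        rw [pow_succ, ho.neg_one_pow]
        linear_combination (-1 : ℂ) * hS
    rw [IH hf', hkey, Finset.sum_Icc_succ_top (show 2 ≤ m + 1 + 1 by omega)]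
    simp only [Nat.add_sub_cancel]
    ring

lemma chiCoeff_zero (q : ℂ) : chiCoeff q 0 = 1 := by
  simp [chiCoeff, toddCoeff]

lemma chiCoeff_one (q : ℂ) : chiCoeff q 1 = q - 1 / 2 := by
  simp only [chiCoeff, toddCoeff, bernoulli'_one, pow_one, Nat.factorial_one]
  push_cast
  ring

lemma chiCoeff_ge_two (q : ℂ) (j : ℕ) (hj : 2 ≤ j) :
    chiCoeff q j = ((bernoulli j : ℚ) : ℂ) / j.factorial := by
  rcases Nat.even_or_odd j with he | ho
  · unfold chiCoeff toddCoeff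
    rw [he.neg_one_pow, bernoulli_eq_bernoulli'_of_ne_one (by omega)]
    ring
  · have h1 : bernoulli' j = 0 := bernoulli'_eq_zero_of_odd ho (by omega)
    have h2 : bernoulli j = 0 := by
      rw [bernoulli_eq_bernoulli'_of_ne_one (by omega), h1]
    unfold chiCoeff toddCoeff
    rw [h1, h2]
    simp

lemma iteratedDeriv_const_fun (j : ℕ) (c : ℂ) (x : ℝ) :
    iteratedDeriv (j + 1) (fun _ : ℝ => c) x = 0 := by
  induction j generalizing c with
  | zero => simp [iteratedDeriv_one]
  | succ j ih =>
    rw [iteratedDeriv_succ', deriv_const']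
    exact ih 0

lemma inner_iteratedDeriv (f : ℝ → ℂ) (hfc : Continuous f) (c₁ c₂ : ℝ) (j : ℕ) (h₁ : ℝ) :
    iteratedDeriv (j + 1) (fun h₂ : ℝ => ∫ x in (c₁ - h₁)..(c₂ + h₂), f x) 0
      = iteratedDeriv j f c₂ := by
  have key := congrFun
    (iteratedDeriv_comp_const_add (j + 1) (fun y : ℝ => ∫ x in (c₁ - h₁)..y, f x) c₂) 0
  refine Eq.trans (b := iteratedDeriv (j + 1) (fun y : ℝ => ∫ x in (c₁ - h₁)..y, f x) (c₂ + 0)) ?_ ?_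
  · exact key
  · rw [add_zero, iteratedDeriv_succ']
    have h2 : deriv (fun y : ℝ => ∫ x in (c₁ - h₁)..y, f x) = f :=
      funext fun y => Continuous.deriv_integral f hfc _ y
    rw [h2]

lemma outer_iteratedDeriv (f : ℝ → ℂ) (hfc : Continuous f) (c₁ c₂ : ℝ) (j : ℕ) :
    iteratedDeriv (j + 1) (fun h₁ : ℝ => ∫ x in (c₁ - h₁)..c₂, f x) 0
      = (-1 : ℂ) ^ j * iteratedDeriv j f c₁ := by
  have h1 : (fun h₁ : ℝ => ∫ x in (c₁ - h₁)..c₂, f x)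
      = fun h₁ : ℝ => (fun t : ℝ => ∫ x in (c₁ + t)..c₂, f x) (-h₁) := by
    funext h₁
    simp [sub_eq_add_neg]
  have key := iteratedDeriv_comp_neg (j + 1) (fun t : ℝ => ∫ x in (c₁ + t)..c₂, f x) (0 : ℝ)
  refine Eq.trans (b := ((-1 : ℝ) ^ (j + 1)) •
      iteratedDeriv (j + 1) (fun t : ℝ => ∫ x in (c₁ + t)..c₂, f x) (-(0 : ℝ))) ?_ ?_
  · exact key
  · rw [neg_zero]
    have key2 := congrFun
      (iteratedDeriv_comp_const_add (j + 1) (fun y : ℝ => ∫ x in y..c₂, f x) c₁) 0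
    have step : iteratedDeriv (j + 1) (fun t : ℝ => ∫ x in (c₁ + t)..c₂, f x) (0 : ℝ)
        = iteratedDeriv (j + 1) (fun y : ℝ => ∫ x in y..c₂, f x) (c₁ + 0) := key2
    rw [step, add_zero, iteratedDeriv_succ']
    have h3 : deriv (fun y : ℝ => ∫ x in y..c₂, f x) = fun y => -f y := by
      funext y
      have h4 : (fun y : ℝ => ∫ x in y..c₂, f x) = fun y : ℝ => -(∫ x in c₂..y, f x) := by
        funext y
        rw [intervalIntegral.integral_symm]
      rw [h4, deriv.fun_neg, Continuous.deriv_integral f hfc]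
    rw [h3, iteratedDeriv_fun_neg]
    have h5 : ((-1 : ℝ) ^ (j + 1)) • (-(iteratedDeriv j f c₁))
        = (-1 : ℂ) ^ (j + 1) * (-(iteratedDeriv j f c₁)) := by
      rw [Complex.real_smul]
      push_cast
      ring
    rw [h5, pow_succ]
    ring

lemma double_sum_eval (q : ℂ) (f : ℝ → ℂ) (hfc : Continuous f) (c₁ c₂ : ℝ) (K : ℕ) :
    (∑ j₁ ∈ Finset.range (K + 1), ∑ j₂ ∈ Finset.range (K + 1),
        chiCoeff q j₁ * chiCoeff q j₂ *
          iteratedDeriv j₁ (fun h₁ : ℝ =>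
            iteratedDeriv j₂ (fun h₂ : ℝ =>
              ∫ x in (c₁ - h₁)..(c₂ + h₂), f x) 0) 0)
      = (∫ x in c₁..c₂, f x)
        + ∑ i ∈ Finset.range K, chiCoeff q (i + 1) * iteratedDeriv i f c₂
        + ∑ i ∈ Finset.range K, chiCoeff q (i + 1) * ((-1 : ℂ) ^ i * iteratedDeriv i f c₁) := by
  have hT00 : iteratedDeriv 0 (fun h₁ : ℝ =>
      iteratedDeriv 0 (fun h₂ : ℝ => ∫ x in (c₁ - h₁)..(c₂ + h₂), f x) 0) 0
      = ∫ x in c₁..c₂, f x := by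
    simp only [iteratedDeriv_zero]
    norm_num
  have hT0s : ∀ i : ℕ, iteratedDeriv 0 (fun h₁ : ℝ =>
      iteratedDeriv (i + 1) (fun h₂ : ℝ => ∫ x in (c₁ - h₁)..(c₂ + h₂), f x) 0) 0
      = iteratedDeriv i f c₂ := by
    intro i
    simp only [iteratedDeriv_zero]
    exact inner_iteratedDeriv f hfc c₁ c₂ i 0
  have hTs0 : ∀ i : ℕ, iteratedDeriv (i + 1) (fun h₁ : ℝ =>
      iteratedDeriv 0 (fun h₂ : ℝ => ∫ x in (c₁ - h₁)..(c₂ + h₂), f x) 0) 0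
      = (-1 : ℂ) ^ i * iteratedDeriv i f c₁ := by
    intro i
    have he : (fun h₁ : ℝ =>
        iteratedDeriv 0 (fun h₂ : ℝ => ∫ x in (c₁ - h₁)..(c₂ + h₂), f x) 0)
        = fun h₁ : ℝ => ∫ x in (c₁ - h₁)..c₂, f x := by
      funext h₁
      simp only [iteratedDeriv_zero]
      norm_num
    rw [he]
    exact outer_iteratedDeriv f hfc c₁ c₂ i
  have hTss : ∀ i l : ℕ, iteratedDeriv (i + 1) (fun h₁ : ℝ =>
      iteratedDeriv (l + 1) (fun h₂ : ℝ => ∫ x in (c₁ - h₁)..(c₂ + h₂), f x) 0) 0 = 0 := by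
    intro i l
    have he : (fun h₁ : ℝ =>
        iteratedDeriv (l + 1) (fun h₂ : ℝ => ∫ x in (c₁ - h₁)..(c₂ + h₂), f x) 0)
        = fun _ : ℝ => iteratedDeriv l f c₂ :=
      funext fun h₁ => inner_iteratedDeriv f hfc c₁ c₂ l h₁
    rw [he]
    exact iteratedDeriv_const_fun i _ 0
  rw [Finset.sum_range_succ']
  have e1 : ∀ i ∈ Finset.range K,
      (∑ j₂ ∈ Finset.range (K + 1), chiCoeff q (i + 1) * chiCoeff q j₂ *
        iteratedDeriv (i + 1) (fun h₁ : ℝ =>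
          iteratedDeriv j₂ (fun h₂ : ℝ => ∫ x in (c₁ - h₁)..(c₂ + h₂), f x) 0) 0)
      = chiCoeff q (i + 1) * ((-1 : ℂ) ^ i * iteratedDeriv i f c₁) := by
    intro i _
    rw [Finset.sum_range_succ']
    have ez : ∀ l ∈ Finset.range K, chiCoeff q (i + 1) * chiCoeff q (l + 1) *
        iteratedDeriv (i + 1) (fun h₁ : ℝ =>
          iteratedDeriv (l + 1) (fun h₂ : ℝ => ∫ x in (c₁ - h₁)..(c₂ + h₂), f x) 0) 0 = 0 := by
      intro l _
      rw [hTss i l, mul_zero]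
    rw [Finset.sum_congr rfl ez, Finset.sum_const_zero, zero_add, chiCoeff_zero, hTs0 i]
    ring
  rw [Finset.sum_congr rfl e1]
  have e0 : (∑ j₂ ∈ Finset.range (K + 1), chiCoeff q 0 * chiCoeff q j₂ *
      iteratedDeriv 0 (fun h₁ : ℝ =>
        iteratedDeriv j₂ (fun h₂ : ℝ => ∫ x in (c₁ - h₁)..(c₂ + h₂), f x) 0) 0)
      = (∫ x in c₁..c₂, f x) + ∑ i ∈ Finset.range K, chiCoeff q (i + 1) * iteratedDeriv i f c₂ := by
    rw [Finset.sum_range_succ']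
    have es : ∀ i ∈ Finset.range K, chiCoeff q 0 * chiCoeff q (i + 1) *
        iteratedDeriv 0 (fun h₁ : ℝ =>
          iteratedDeriv (i + 1) (fun h₂ : ℝ => ∫ x in (c₁ - h₁)..(c₂ + h₂), f x) 0) 0
        = chiCoeff q (i + 1) * iteratedDeriv i f c₂ := by
      intro i _
      rw [hT0s i, chiCoeff_zero, one_mul]
    rw [Finset.sum_congr rfl es, hT00, chiCoeff_zero, one_mul, one_mul]
    ring
  rw [e0]
  ring

lemma bernoulli_parity_term (i : ℕ) (Y : ℂ) :
    ((bernoulli (i + 2) : ℚ) : ℂ) / (i + 2).factorial * ((-1 : ℂ) ^ (i + 1) * Y)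
      = -(((bernoulli (i + 2) : ℚ) : ℂ) / (i + 2).factorial * Y) := by
  rcases Nat.even_or_odd i with he | ho
  · rw [pow_succ, he.neg_one_pow]
    ring
  · have h2 : ((bernoulli (i + 2) : ℚ) : ℂ) = 0 := by
      have hodd : Odd (i + 2) := by
        obtain ⟨t, ht⟩ := ho
        exact ⟨t + 1, by omega⟩
      rw [bernoulli_eq_bernoulli'_of_ne_one (by omega),
        bernoulli'_eq_zero_of_odd hodd (by omega)]
      norm_num
    rw [h2]
    ring

lemma chi_sum_eq (q : ℂ) (k : ℕ) (hk : 1 ≤ k) (M : ℕ) (hM : M = 2 * k ∨ M = 2 * k + 1)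
    (X : ℕ → ℂ) :
    ∑ i ∈ Finset.range (2 * k), chiCoeff q (i + 1) * X i
      = (q - 1 / 2) * X 0
        + ∑ i ∈ Finset.range (M - 1),
            ((bernoulli (i + 2) : ℚ) : ℂ) / (i + 2).factorial * X (i + 1) := by
  have h2k : 2 * k = (2 * k - 1) + 1 := by omega
  rw [h2k, Finset.sum_range_succ', chiCoeff_one]
  have et : ∀ i ∈ Finset.range (2 * k - 1), chiCoeff q (i + 1 + 1) * X (i + 1)
      = ((bernoulli (i + 2) : ℚ) : ℂ) / (i + 2).factorial * X (i + 1) := by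
    intro i _
    rw [show i + 1 + 1 = i + 2 from rfl, chiCoeff_ge_two q (i + 2) (by omega)]
  rw [Finset.sum_congr rfl et]
  rcases hM with h | h
  · rw [show M - 1 = 2 * k - 1 by omega]
    ring
  · rw [show M - 1 = (2 * k - 1) + 1 by omega, Finset.sum_range_succ]
    have hz : ((bernoulli ((2 * k - 1) + 2) : ℚ) : ℂ) = 0 := by
      have hodd : Odd ((2 * k - 1) + 2) := ⟨k, by omega⟩
      rw [bernoulli_eq_bernoulli'_of_ne_one (by omega),
        bernoulli'_eq_zero_of_odd hodd (by omega)]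
      norm_num
    rw [hz]
    ring

/-- **Weighted Euler–Maclaurin with remainder for intervals.**
For `q ∈ ℂ`, integers `a < b`, an integer `m > 1`, `k = ⌊m/2⌋` and `f : ℝ → ℂ` of class `C^m`,
`Σ^q_{[a,b]} f = χ_q^{2k}(∂/∂h₁) χ_q^{2k}(∂/∂h₂) ∫_{a-h₁}^{b+h₂} f |_{h₁=h₂=0} + R_m^{[a,b]}(f)`. -/
theorem weighted_euler_maclaurin_interval
    (q : ℂ) (a b : ℤ) (hab : a < b) (m : ℕ) (hm : 1 < m)
    (f : ℝ → ℂ) (hf : ContDiff ℝ m f) :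
    q * f a + (∑ j ∈ Finset.Ioo a b, f j) + q * f b =
      (∑ j₁ ∈ Finset.range (2 * (m / 2) + 1), ∑ j₂ ∈ Finset.range (2 * (m / 2) + 1),
        chiCoeff q j₁ * chiCoeff q j₂ *
          iteratedDeriv j₁ (fun h₁ : ℝ =>
            iteratedDeriv j₂ (fun h₂ : ℝ =>
              ∫ x in ((a : ℝ) - h₁)..((b : ℝ) + h₂), f x) 0) 0)
      + (-1 : ℂ) ^ (m - 1) *
          ∫ x in (a : ℝ)..(b : ℝ), periodicBernoulli m x * iteratedDeriv m f x := by
  obtain ⟨m', rfl⟩ : ∃ m', m = m' + 2 := ⟨m - 2, by omega⟩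
  set k : ℕ := (m' + 2) / 2 with hkdef
  have hk1 : 1 ≤ k := by omega
  have hM : m' + 2 = 2 * k ∨ m' + 2 = 2 * k + 1 := by omega
  have hfc : Continuous f := hf.continuous
  set N : ℕ := (b - a).toNat with hNdef
  have hNb : (a : ℝ) + (N : ℝ) = (b : ℝ) := by
    have h := Int.toNat_of_nonneg (show (0:ℤ) ≤ b - a by omega)
    have h2 : ((N : ℕ) : ℝ) = (b : ℝ) - (a : ℝ) := by
      rw [hNdef]
      exact_mod_cast congrArg (fun z : ℤ => (z : ℝ)) h
    rw [h2]
    ring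
  -- Euler–Maclaurin
  have hEM := em_main a N (m' + 1) f (by exact_mod_cast hf)
  simp only [show m' + 1 + 1 = m' + 2 from rfl] at hEM
  rw [hNb] at hEM
  -- Icc sum to range sum
  have hmap : ∑ j ∈ Finset.Icc a b, f (j : ℝ) = ∑ i ∈ Finset.range (N + 1), f ((a : ℝ) + i) := by
    have hset : Finset.Icc a b
        = (Finset.range (N + 1)).map ⟨fun i : ℕ => a + (i : ℤ), fun i j h => by simpa using h⟩ := by
      ext x
      simp only [Finset.mem_Icc, Finset.mem_map, Finset.mem_range, DFunLike.coe]
      constructor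
      · rintro ⟨h1, h2⟩
        exact ⟨(x - a).toNat, by omega, by omega⟩
      · rintro ⟨i, hi, rfl⟩
        omega
    rw [hset, Finset.sum_map]
    refine Finset.sum_congr rfl fun i _ => ?_
    simp only [DFunLike.coe]
    congr 1
    push_cast
    ring
  have hIoo : ∑ j ∈ Finset.Ioo a b, f (j : ℝ)
      = (∑ i ∈ Finset.range (N + 1), f ((a : ℝ) + i)) - f a - f b := by
    rw [← hmap]
    have h1 : Finset.Icc a b = insert a (insert b (Finset.Ioo a b)) := by
      rw [Finset.Ioo_insert_right hab, Finset.Ioc_insert_left hab.le]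
    rw [h1, Finset.sum_insert (by simp [hab.ne, hab]),
      Finset.sum_insert (by simp)]
    ring
  -- evaluate the double sum
  rw [double_sum_eval q f hfc (a : ℝ) (b : ℝ) (2 * k)]
  -- chi sums
  have hb_side := chi_sum_eq q k hk1 (m' + 2) hM (fun i => iteratedDeriv i f (b : ℝ))
  have ha_side := chi_sum_eq q k hk1 (m' + 2) hM
    (fun i => (-1 : ℂ) ^ i * iteratedDeriv i f (a : ℝ))
  simp only [show m' + 2 - 1 = m' + 1 from rfl] at hb_side ha_side
  rw [hb_side, ha_side]
  simp only [pow_zero, one_mul, iteratedDeriv_zero] at *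
  have hterm : ∀ i ∈ Finset.range (m' + 1),
      ((bernoulli (i + 2) : ℚ) : ℂ) / (i + 2).factorial
          * ((-1 : ℂ) ^ (i + 1) * iteratedDeriv (i + 1) f (a : ℝ))
        = -(((bernoulli (i + 2) : ℚ) : ℂ) / (i + 2).factorial * iteratedDeriv (i + 1) f (a : ℝ)) :=
    fun i _ => bernoulli_parity_term i _
  rw [Finset.sum_congr rfl hterm, Finset.sum_neg_distrib]
  -- Icc Bernoulli sum to range sum in hEM
  have hIccSum : ∑ j ∈ Finset.Icc 2 (m' + 2), ((bernoulli j : ℚ) : ℂ) / j.factorial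
        * (iteratedDeriv (j - 1) f (b : ℝ) - iteratedDeriv (j - 1) f (a : ℝ))
      = ∑ i ∈ Finset.range (m' + 1), ((bernoulli (i + 2) : ℚ) : ℂ) / (i + 2).factorial
        * (iteratedDeriv (i + 1) f (b : ℝ) - iteratedDeriv (i + 1) f (a : ℝ)) := by
    rw [← Finset.Ico_add_one_right_eq_Icc, Finset.sum_Ico_eq_sum_range]
    refine Finset.sum_congr (by rw [show m' + 2 + 1 - 2 = m' + 1 by omega]) fun i _ => ?_
    rw [add_comm 2 i]
    rfl
  rw [hIccSum] at hEM
  simp only [mul_sub, Finset.sum_sub_distrib] at hEM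
  rw [hIoo]
  simp only [show m' + 2 - 1 = m' + 1 from rfl]
  linear_combination hEM
end

section
/- Twisted weighted Euler–Maclaurin for a ray: Let λ ≠ 1 be a root of unity, let q ∈ ℂ, let k > 1 be an integer, and let f : ℝ → ℂ be a compactly supported function of class C^k. Then q f(0) + Σ_{n=1}^{∞} λ^n f(n) = N_q^{k,λ}(∂/∂h) G(h) |_{h=0} + (−1)^{k−1} ∫_0^{∞} Q_{k,λ}(x) f^{(k)}(x) dx, where G(h) = ∫_{−h}^{∞} f(x) dx. -/
open scoped BigOperators
open MeasureTheory

/-- **Twisted weighted Euler–Maclaurin for a ray.**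
Let `λ ≠ 1` be a root of unity of order `N`. The functions `Q m = Q_{m,λ}` are given by
`Q_{1,λ}(x) = λ^{⌊x⌋+1}/(1-λ)` and, for `m ≥ 2`, `Q_{m,λ}` is continuous with
`Q_{m,λ}(x) = Q_{m,λ}(0) + ∫₀ˣ Q_{m-1,λ}` and `∫₀ᴺ Q_{m,λ} = 0`.
For `q ∈ ℂ`, an integer `k > 1` and a compactly supported `f : ℝ → ℂ` of class `C^k`,
`q f(0) + ∑_{n≥1} λⁿ f(n) = N_q^{k,λ}(∂/∂h) ∫_{-h}^∞ f |_{h=0}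
  + (-1)^{k-1} ∫₀^∞ Q_{k,λ}(x) f^{(k)}(x) dx`,
where `N_q^{k,λ}(S) = (q + λ/(1-λ))S + ∑_{j=2}^k Q_{j,λ}(0) Sʲ`. -/
theorem twisted_weighted_euler_maclaurin_ray
    (N : ℕ) (hN : 0 < N) (lam : ℂ) (hroot : lam ^ N = 1) (hlam : lam ≠ 1)
    (Q : ℕ → ℝ → ℂ)
    (hQ1 : ∀ x : ℝ, Q 1 x = lam ^ (⌊x⌋ + 1) / (1 - lam))
    (hQcont : ∀ m, 2 ≤ m → Continuous (Q m))
    (hQprim : ∀ m, 2 ≤ m → ∀ x : ℝ, Q m x = Q m 0 + ∫ t in (0 : ℝ)..x, Q (m - 1) t)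
    (hQavg : ∀ m, 2 ≤ m → (∫ t in (0 : ℝ)..(N : ℝ), Q m t) = 0)
    (q : ℂ) (k : ℕ) (hk : 1 < k)
    (f : ℝ → ℂ) (hf : ContDiff ℝ k f) (hsupp : HasCompactSupport f) :
    q * f 0 + (∑' n : ℕ, lam ^ (n + 1) * f (n + 1)) =
      ((q + lam / (1 - lam)) *
          iteratedDeriv 1 (fun h : ℝ => ∫ x in Set.Ioi (-h), f x) 0
        + ∑ j ∈ Finset.Icc 2 k,
            Q j 0 * iteratedDeriv j (fun h : ℝ => ∫ x in Set.Ioi (-h), f x) 0)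
      + (-1 : ℂ) ^ (k - 1) * ∫ x in Set.Ioi (0 : ℝ), Q k x * iteratedDeriv k f x := by
  obtain ⟨k', rfl⟩ : ∃ k', k = k' + 1 := ⟨k - 1, by omega⟩
  set k := k' + 1
  have hk' : 1 ≤ k' := by omega
  have hne : (1 : ℂ) - lam ≠ 0 := sub_ne_zero.2 fun h => hlam h.symm
  have hfc : Continuous f := hf.continuous
  have hk1 : (1 : WithTop ℕ∞) ≤ (k : ℕ∞) := by exact_mod_cast Nat.one_le_iff_ne_zero.mpr (by omega)
  -- choose a cutoff M beyond the support
  obtain ⟨R, hR0, hR⟩ := hsupp.exists_pos_le_norm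
  set M : ℕ := ⌈R⌉₊ + 1 with hMdef
  have hRM : R < (M : ℝ) := by
    have := Nat.le_ceil R
    have h2 : ((⌈R⌉₊ : ℝ)) < (M : ℝ) := by rw [hMdef]; push_cast; linarith
    linarith
  have hM0 : (0:ℝ) < (M:ℝ) := by positivity
  have htsf : tsupport f ⊆ Set.Icc (-R) R := by
    apply closure_minimal _ isClosed_Icc
    intro y hy
    rcases le_or_gt R ‖y‖ with h | h
    · exact absurd (hR y h) hy
    · rw [Real.norm_eq_abs, abs_lt] at h; exact ⟨h.1.le, h.2.le⟩
  have hts : ∀ j : ℕ, tsupport (iteratedDeriv j f) ⊆ tsupport f := by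
    intro j
    induction j with
    | zero => simp [iteratedDeriv_zero]
    | succ j ih =>
      rw [iteratedDeriv_succ]
      exact closure_minimal (support_deriv_subset.trans ih) (isClosed_tsupport f)
  have hgM : ∀ j : ℕ, ∀ x : ℝ, (M : ℝ) ≤ x → iteratedDeriv j f x = 0 := by
    intro j x hx
    apply image_eq_zero_of_notMem_tsupport
    intro hmem
    have h2 := htsf (hts j hmem)
    have := h2.2
    linarith
  have hfM : ∀ x : ℝ, (M : ℝ) ≤ x → f x = 0 := by
    intro x hx
    have := hgM 0 x hx
    simpa using this
  -- continuity and differentiability of iterated derivatives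
  have hgcont : ∀ m : ℕ, m ≤ k → Continuous (iteratedDeriv m f) := by
    intro m hm
    exact hf.continuous_iteratedDeriv m (by exact_mod_cast hm)
  have hgderiv : ∀ m : ℕ, m < k → ∀ x : ℝ,
      HasDerivAt (iteratedDeriv m f) (iteratedDeriv (m+1) f x) x := by
    intro m hm x
    have hd : Differentiable ℝ (iteratedDeriv m f) :=
      hf.differentiable_iteratedDeriv m (by exact_mod_cast hm)
    have := (hd x).hasDerivAt
    rwa [← iteratedDeriv_succ] at this
  -- Q 1 on [n, n+1)
  have hQ1val : ∀ (n : ℕ) (x : ℝ), (n:ℝ) ≤ x → x < (n:ℝ) + 1 →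
      Q 1 x = lam ^ (n+1) / (1 - lam) := by
    intro n x h1 h2
    rw [hQ1 x]
    have hfl : ⌊x⌋ = (n : ℤ) := by
      rw [Int.floor_eq_iff]
      constructor <;> push_cast <;> linarith
    rw [hfl, show ((n:ℤ) + 1) = ((n+1 : ℕ) : ℤ) by push_cast; ring, zpow_natCast]
  -- interval integrability of Q 1 * φ on [n, n+1]
  have hQ1mul : ∀ (φ : ℝ → ℂ), Continuous φ → ∀ n : ℕ,
      IntervalIntegrable (fun x => Q 1 x * φ x) volume (n:ℝ) ((n:ℝ)+1) := by
    intro φ hφ n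
    rw [intervalIntegrable_iff_integrableOn_Ioc_of_le (by linarith)]
    have hc : IntegrableOn (fun x => (lam ^ (n+1) / (1-lam)) * φ x)
        (Set.Ioc (n:ℝ) ((n:ℝ)+1)) volume := (continuous_const.mul hφ).integrableOn_Ioc
    refine hc.congr ?_
    have hne1 : ∀ᵐ x : ℝ, x ≠ (n:ℝ)+1 := by
      rw [ae_iff]; simpa using measure_singleton ((n:ℝ)+1)
    filter_upwards [ae_restrict_mem measurableSet_Ioc, ae_restrict_of_ae hne1] with x hx hxne
    rw [hQ1val n x hx.1.le (lt_of_le_of_ne hx.2 hxne)]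
  have hQ1mulN : ∀ (φ : ℝ → ℂ), Continuous φ → ∀ n : ℕ,
      IntervalIntegrable (fun x => Q 1 x * φ x) volume 0 (n:ℝ) := by
    intro φ hφ n
    induction n with
    | zero => simp
    | succ n ih =>
      have h2 := hQ1mul φ hφ n
      have := ih.trans h2
      convert this using 2
      push_cast; ring
  have hQ1int : ∀ t : ℝ, 0 ≤ t → IntervalIntegrable (Q 1) volume 0 t := by
    intro t ht
    have h := hQ1mulN (fun _ => 1) continuous_const ⌈t⌉₊
    simp only [mul_one] at h
    apply h.mono_set
    rw [Set.uIcc_of_le ht, Set.uIcc_of_le (by positivity)]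
    exact Set.Icc_subset_Icc le_rfl (Nat.le_ceil t)
  -- right derivative of Q 2
  have hQ2right : ∀ x : ℝ, 0 < x → HasDerivWithinAt (Q 2) (Q 1 x) (Set.Ioi x) x := by
    intro x hx
    set n : ℤ := ⌊x⌋ with hn
    have hx1 : x < (n:ℝ) + 1 := Int.lt_floor_add_one x
    have hxn : (n:ℝ) ≤ x := Int.floor_le x
    have key : ∀ y, x ≤ y → y < (n:ℝ)+1 → Q 2 y = Q 2 x + (y - x) • Q 1 x := by
      intro y hxy hy1
      have e1 : Q 2 y = Q 2 0 + ∫ t in (0:ℝ)..y, Q 1 t := by simpa using hQprim 2 le_rfl y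
      have e2 : Q 2 x = Q 2 0 + ∫ t in (0:ℝ)..x, Q 1 t := by simpa using hQprim 2 le_rfl x
      have hsub : (∫ t in (0:ℝ)..y, Q 1 t) - ∫ t in (0:ℝ)..x, Q 1 t = ∫ t in x..y, Q 1 t :=
        intervalIntegral.integral_interval_sub_left (hQ1int y (by linarith)) (hQ1int x hx.le)
      have heq : (∫ t in x..y, Q 1 t) = ∫ t in x..y, Q 1 x := by
        apply intervalIntegral.integral_congr
        intro t ht
        rw [Set.uIcc_of_le hxy] at ht
        have hfl : ⌊t⌋ = n := by
          rw [Int.floor_eq_iff]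
          exact ⟨le_trans hxn ht.1, lt_of_le_of_lt ht.2 hy1⟩
        rw [hQ1 t, hQ1 x, ← hn, hfl]
      rw [intervalIntegral.integral_const] at heq
      have h3 : (∫ t in (0:ℝ)..y, Q 1 t) = (∫ t in (0:ℝ)..x, Q 1 t) + (y - x) • Q 1 x := by
        rw [← heq]; linear_combination hsub
      rw [e1, e2, h3, add_assoc]
    have haff : HasDerivWithinAt (fun y => Q 2 x + (y - x) • Q 1 x) (Q 1 x) (Set.Ioi x) x := by
      have h1 : HasDerivAt (fun y : ℝ => (y - x)) 1 x := (hasDerivAt_id x).sub_const x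
      have h2 := (h1.smul_const (Q 1 x)).const_add (Q 2 x)
      simpa using h2.hasDerivWithinAt
    apply haff.congr_of_eventuallyEq ?_ (by simp)
    filter_upwards [nhdsWithin_le_nhds (Iio_mem_nhds hx1), self_mem_nhdsWithin] with y hy1 hy2
    exact key y (le_of_lt hy2) hy1
  -- right derivative of Q (m+1) for m ≥ 1
  have hQright : ∀ m : ℕ, 1 ≤ m → ∀ x : ℝ, 0 < x →
      HasDerivWithinAt (Q (m+1)) (Q m x) (Set.Ioi x) x := by
    intro m hm x hx
    rcases eq_or_lt_of_le hm with h1 | h2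
    · rw [← h1]; exact hQ2right x hx
    · have hm2 : 2 ≤ m := h2
      have hder : HasDerivAt (fun y => Q (m+1) 0 + ∫ t in (0:ℝ)..y, Q m t) (Q m x) x := by
        exact (((hQcont m hm2).integral_hasStrictDerivAt 0 x).hasDerivAt).const_add _
      have hfun : Q (m+1) = fun y => Q (m+1) 0 + ∫ t in (0:ℝ)..y, Q m t := by
        funext y
        simpa using hQprim (m+1) (by omega) y
      rw [hfun]
      exact hder.hasDerivWithinAt
  -- integration by parts
  have hparts : ∀ m : ℕ, 1 ≤ m → m < k →
      (∫ x in (0:ℝ)..(M:ℝ), Q m x * iteratedDeriv m f x)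
        = -(Q (m+1) 0 * iteratedDeriv m f 0)
          - ∫ x in (0:ℝ)..(M:ℝ), Q (m+1) x * iteratedDeriv (m+1) f x := by
    intro m hm hmk
    have hm2 : 2 ≤ m + 1 := by omega
    have hgmc : Continuous (iteratedDeriv m f) := hgcont m hmk.le
    have hgm1c : Continuous (iteratedDeriv (m+1) f) := hgcont (m+1) hmk
    have hQm1c : Continuous (Q (m+1)) := hQcont (m+1) hm2
    have hint1 : IntervalIntegrable (fun x => Q m x * iteratedDeriv m f x) volume 0 (M:ℝ) := by
      rcases eq_or_lt_of_le hm with h1 | h2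
      · rw [← h1]; exact hQ1mulN _ (by rw [h1]; exact hgmc) M
      · exact ((hQcont m h2).mul hgmc).intervalIntegrable _ _
    have hint2 : IntervalIntegrable (fun x => Q (m+1) x * iteratedDeriv (m+1) f x)
        volume 0 (M:ℝ) := (hQm1c.mul hgm1c).intervalIntegrable _ _
    have hFTC := intervalIntegral.integral_eq_sub_of_hasDeriv_right_of_le
      (f := fun x => Q (m+1) x * iteratedDeriv m f x)
      (f' := fun x => Q m x * iteratedDeriv m f x + Q (m+1) x * iteratedDeriv (m+1) f x)
      hM0.le ((hQm1c.mul hgmc).continuousOn)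
      (fun x hx => (hQright m hm x hx.1).mul ((hgderiv m hmk x).hasDerivWithinAt))
      (hint1.add hint2)
    rw [intervalIntegral.integral_add hint1 hint2] at hFTC
    simp only [hgM m (M:ℝ) le_rfl, mul_zero, zero_sub] at hFTC
    linear_combination hFTC
  -- base computation on each [n, n+1]
  have hstep : ∀ n : ℕ, (∫ x in (n:ℝ)..((n:ℝ)+1), Q 1 x * iteratedDeriv 1 f x)
      = lam ^ (n+1)/(1-lam) * (f ((n:ℝ)+1) - f (n:ℝ)) := by
    intro n
    have hcongr : (∫ x in (n:ℝ)..((n:ℝ)+1), Q 1 x * iteratedDeriv 1 f x)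
        = ∫ x in (n:ℝ)..((n:ℝ)+1), lam ^ (n+1)/(1-lam) * iteratedDeriv 1 f x := by
      apply intervalIntegral.integral_congr_ae
      have hne1 : ∀ᵐ x : ℝ, x ≠ (n:ℝ)+1 := by
        rw [ae_iff]; simpa using measure_singleton ((n:ℝ)+1)
      filter_upwards [hne1] with x hxne hxI
      rw [Set.uIoc_of_le (by linarith)] at hxI
      rw [hQ1val n x hxI.1.le (lt_of_le_of_ne hxI.2 hxne)]
    rw [hcongr, intervalIntegral.integral_const_mul]
    congr 1
    simp only [iteratedDeriv_one]
    exact intervalIntegral.integral_deriv_eq_sub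
      (fun x _ => (hf.differentiable (by exact_mod_cast (show k ≠ 0 by omega))) x)
      ((hf.continuous_deriv hk1).intervalIntegrable _ _)
  have hg1c : Continuous (iteratedDeriv 1 f) := hgcont 1 (by omega)
  have hbase : (∫ x in (0:ℝ)..(M:ℝ), Q 1 x * iteratedDeriv 1 f x)
      = (∑ n ∈ Finset.range M, lam ^ (n+1) * f ((n:ℝ)+1)) - lam/(1-lam) * f 0 := by
    have hadj := intervalIntegral.sum_integral_adjacent_intervals
      (a := fun i : ℕ => (i:ℝ)) (μ := volume)
      (f := fun x => Q 1 x * iteratedDeriv 1 f x) (n := M)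
      (fun i _ => by push_cast; exact hQ1mul _ hg1c i)
    simp only [Nat.cast_zero, Nat.cast_add, Nat.cast_one] at hadj
    rw [← hadj]
    set T : ℕ → ℂ := fun j => lam ^ (j+1)/(1-lam) * f (j:ℝ) with hT
    have hterm : ∀ i : ℕ, lam ^ (i+1)/(1-lam) * (f ((i:ℝ)+1) - f (i:ℝ))
        = lam ^ (i+1) * f ((i:ℝ)+1) + (T (i+1) - T i) := by
      intro i
      rw [hT]
      simp only []
      push_cast
      field_simp
      ring
    calc (∑ i ∈ Finset.range M, ∫ x in (i:ℝ)..((i:ℝ)+1), Q 1 x * iteratedDeriv 1 f x)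
        = ∑ i ∈ Finset.range M, (lam ^ (i+1) * f ((i:ℝ)+1) + (T (i+1) - T i)) :=
          Finset.sum_congr rfl (fun i _ => by rw [hstep i, hterm i])
      _ = (∑ i ∈ Finset.range M, lam ^ (i+1) * f ((i:ℝ)+1)) + (T M - T 0) := by
          rw [Finset.sum_add_distrib, Finset.sum_range_sub]
      _ = (∑ n ∈ Finset.range M, lam ^ (n+1) * f ((n:ℝ)+1)) - lam/(1-lam) * f 0 := by
          rw [hT]
          simp only []
          rw [hfM (M:ℝ) le_rfl]
          push_cast
          ring
  -- induction on integration by parts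
  have hind : ∀ i : ℕ, i + 1 ≤ k →
      (∫ x in (0:ℝ)..(M:ℝ), Q 1 x * iteratedDeriv 1 f x)
        = (∑ j ∈ Finset.Icc 2 (i+1), (-1:ℂ)^(j-1) * (Q j 0 * iteratedDeriv (j-1) f 0))
          + (-1:ℂ)^i * ∫ x in (0:ℝ)..(M:ℝ), Q (i+1) x * iteratedDeriv (i+1) f x := by
    intro i
    induction i with
    | zero =>
      intro _
      rw [Finset.Icc_eq_empty (by omega)]
      simp
    | succ i ih =>
      intro hik
      rw [ih (by omega), hparts (i+1) (by omega) (by omega)]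
      rw [Finset.sum_Icc_succ_top (by omega : 2 ≤ i+1+1)]
      simp only [Nat.add_sub_cancel]
      rw [pow_succ]
      ring
  -- derivatives of G
  have hfint : Integrable f := hfc.integrable_of_hasCompactSupport hsupp
  set G : ℝ → ℂ := fun h => ∫ x in Set.Ioi (-h), f x with hGdef
  have hGrepr : ∀ h : ℝ, G h
      = ((∫ x, f x) - ∫ x in Set.Iic (0:ℝ), f x) - ∫ t in (0:ℝ)..(-h), f t := by
    intro h
    have h1 : (∫ x in Set.Iic (-h), f x) + ∫ x in Set.Ioi (-h), f x = ∫ x, f x :=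
      intervalIntegral.integral_Iic_add_Ioi hfint.integrableOn hfint.integrableOn
    have h2 : (∫ x in Set.Iic (-h), f x) - ∫ x in Set.Iic (0:ℝ), f x
        = ∫ t in (0:ℝ)..(-h), f t :=
      intervalIntegral.integral_Iic_sub_Iic hfint.integrableOn hfint.integrableOn
    simp only [hGdef]
    linear_combination h1 - h2
  have hGderiv : ∀ h : ℝ, HasDerivAt G (f (-h)) h := by
    intro h
    have hcomp : HasDerivAt (fun u : ℝ => ∫ t in (0:ℝ)..(-u), f t) ((-1:ℝ) • f (-h)) h := by
      exact ((hfc.integral_hasStrictDerivAt 0 (-h)).hasDerivAt).scomp h (hasDerivAt_neg h)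
    have h2 := hcomp.const_sub ((∫ x, f x) - ∫ x in Set.Iic (0:ℝ), f x)
    have hG : G = fun h : ℝ => ((∫ x, f x) - ∫ x in Set.Iic (0:ℝ), f x)
        - ∫ t in (0:ℝ)..(-h), f t := funext hGrepr
    rw [hG]
    simpa using h2
  have hGiter : ∀ i : ℕ, i + 1 ≤ k →
      iteratedDeriv (i+1) G = fun h : ℝ => (-1:ℂ)^i * iteratedDeriv i f (-h) := by
    intro i
    induction i with
    | zero =>
      intro _
      funext h
      rw [iteratedDeriv_one, (hGderiv h).deriv]
      simp
    | succ i ih =>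
      intro hik
      rw [iteratedDeriv_succ, ih (by omega)]
      funext h
      have hd : HasDerivAt (fun y : ℝ => iteratedDeriv i f (-y))
          ((-1:ℝ) • iteratedDeriv (i+1) f (-h)) h :=
        (hgderiv i (by omega) (-h)).scomp h (hasDerivAt_neg h)
      have hd2 := hd.const_mul ((-1:ℂ)^i)
      rw [hd2.deriv]
      rw [pow_succ]
      simp only [neg_one_smul]
      ring
  -- the tail integral over Ioi 0 equals the interval integral
  have hlast : (∫ x in Set.Ioi (0:ℝ), Q k x * iteratedDeriv k f x)
      = ∫ x in (0:ℝ)..(M:ℝ), Q k x * iteratedDeriv k f x := by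
    have hk2 : 2 ≤ k := by omega
    have hcontk : Continuous fun x => Q k x * iteratedDeriv k f x :=
      (hQcont k hk2).mul (hgcont k le_rfl)
    have hzero : ∀ x ∈ Set.Ioi (M:ℝ), Q k x * iteratedDeriv k f x = 0 := by
      intro x hx
      rw [hgM k x (le_of_lt hx), mul_zero]
    rw [intervalIntegral.integral_of_le hM0.le]
    rw [← Set.Ioc_union_Ioi_eq_Ioi hM0.le]
    rw [setIntegral_union (Set.Ioc_disjoint_Ioi le_rfl) measurableSet_Ioi
      hcontk.integrableOn_Ioc
      ((integrableOn_congr_fun hzero measurableSet_Ioi).mpr (integrableOn_zero))]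
    rw [setIntegral_congr_fun measurableSet_Ioi hzero]
    simp
  -- the tsum is a finite sum
  have htsum : (∑' n : ℕ, lam ^ (n + 1) * f (n + 1))
      = ∑ n ∈ Finset.range M, lam ^ (n+1) * f ((n:ℝ)+1) := by
    apply tsum_eq_sum
    intro n hn
    rw [Finset.mem_range, not_lt] at hn
    have hMn : (M:ℝ) ≤ (n:ℝ)+1 := by
      have : (M:ℝ) ≤ (n:ℝ) := by exact_mod_cast hn
      linarith
    rw [hfM _ hMn, mul_zero]
  -- assemble
  have hS : (∑ n ∈ Finset.range M, lam ^ (n+1) * f ((n:ℝ)+1))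
      = lam/(1-lam) * f 0
        + (∑ j ∈ Finset.Icc 2 k, (-1:ℂ)^(j-1) * (Q j 0 * iteratedDeriv (j-1) f 0))
        + (-1:ℂ)^k' * ∫ x in (0:ℝ)..(M:ℝ), Q k x * iteratedDeriv k f x := by
    have h1 := hind k' le_rfl
    rw [hbase] at h1
    linear_combination h1
  have hG1 : iteratedDeriv 1 G 0 = f 0 := by
    have := hGiter 0 (by omega)
    rw [show (0:ℕ)+1 = 1 from rfl] at this
    rw [this]
    simp
  have hGsum : (∑ j ∈ Finset.Icc 2 k, Q j 0 * iteratedDeriv j G 0)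
      = ∑ j ∈ Finset.Icc 2 k, Q j 0 * ((-1:ℂ)^(j-1) * iteratedDeriv (j-1) f 0) := by
    apply Finset.sum_congr rfl
    intro j hj
    rw [Finset.mem_Icc] at hj
    have hj1 : j - 1 + 1 = j := by omega
    have := hGiter (j-1) (by omega)
    rw [hj1] at this
    rw [this]
    simp
  rw [htsum, hS, hG1, hGsum, hlast]
  rw [show k - 1 = k' from by omega]
  rw [show (∑ j ∈ Finset.Icc 2 k, Q j 0 * ((-1:ℂ)^(j-1) * iteratedDeriv (j-1) f 0))
      = ∑ j ∈ Finset.Icc 2 k, (-1:ℂ)^(j-1) * (Q j 0 * iteratedDeriv (j-1) f 0) from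
    Finset.sum_congr rfl (fun j _ => by ring)]
  ring
end

section
/- Symmetry of the twisted Euler–Maclaurin polynomials: Let λ ≠ 1 be a root of unity, q ∈ ℂ, and m ≥ 1 an integer. Then the polynomial identity N_{1−q}^{m,1/λ}(S) = N_q^{m,λ}(−S) holds. -/
open scoped BigOperators
open MeasureTheory

/-- The polynomial `N_q^{m,λ}(S) = (q + λ/(1-λ))S + ∑_{j=2}^m Q_{j,λ}(0) Sʲ`,
where `Q j 0` are the values at `0` of the functions `Q_{j,λ}`. -/
noncomputable def twistPoly (q lam : ℂ) (Q : ℕ → ℝ → ℂ) (m : ℕ) : Polynomial ℂ :=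
  Polynomial.C (q + lam / (1 - lam)) * Polynomial.X
    + ∑ j ∈ Finset.Icc 2 m, Polynomial.C (Q j 0) * Polynomial.X ^ j

-- auxiliary: periodicity/integrability/zero-mean bundle for the Q family
lemma twistAux (N : ℕ) (hN : 0 < N) (lam : ℂ) (hroot : lam ^ N = 1) (hlam : lam ≠ 1)
    (Q : ℕ → ℝ → ℂ)
    (hQ1 : ∀ x : ℝ, Q 1 x = lam ^ (⌊x⌋ + 1) / (1 - lam))
    (hQcont : ∀ j, 2 ≤ j → Continuous (Q j))
    (hQprim : ∀ j, 2 ≤ j → ∀ x : ℝ, Q j x = Q j 0 + ∫ t in (0 : ℝ)..x, Q (j - 1) t)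
    (hQavg : ∀ j, 2 ≤ j → (∫ t in (0 : ℝ)..(N : ℝ), Q j t) = 0) :
    ∀ j, 1 ≤ j → Function.Periodic (Q j) N ∧ (∫ t in (0 : ℝ)..(N : ℝ), Q j t) = 0 ∧
      ∀ a b : ℝ, IntervalIntegrable (Q j) volume a b := by
  have hlam0 : lam ≠ 0 := by
    intro h; rw [h] at hroot; simp [zero_pow hN.ne'] at hroot
  have hne : (1 : ℂ) - lam ≠ 0 := sub_ne_zero.mpr (Ne.symm hlam)
  -- |lam| = 1
  have habs : ‖lam‖ = 1 := by
    have h1 : ‖lam‖ ^ N = 1 := by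
      rw [← norm_pow, hroot, norm_one]
    rcases (pow_eq_one_iff_cases).1 h1 with h | h | h
    · omega
    · exact h
    · exfalso; have := norm_nonneg lam; rw [h.1] at this; linarith
  -- measurability of Q 1
  have meas1 : Measurable (Q 1) := by
    have : Q 1 = (fun n : ℤ => lam ^ (n + 1) / (1 - lam)) ∘ (fun x : ℝ => ⌊x⌋) :=
      funext fun x => hQ1 x
    rw [this]
    exact measurable_from_top.comp Int.measurable_floor
  -- integrability of Q 1
  have int1 : ∀ a b : ℝ, IntervalIntegrable (Q 1) volume a b := by
    intro a b
    apply IntervalIntegrable.mono_fun' (g := fun _ => ‖1 - lam‖⁻¹)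
      intervalIntegrable_const
    · exact (meas1.aestronglyMeasurable).restrict
    · filter_upwards with x
      rw [hQ1 x]
      simp only [norm_div]
      rw [norm_zpow, habs, one_zpow, one_div]
  -- integral of Q 1 over one unit interval
  have hstep : ∀ k : ℕ, (∫ t in (k:ℝ)..((k:ℝ)+1), Q 1 t) = lam ^ (k+1) / (1 - lam) := by
    intro k
    have hcong : (∫ t in (k:ℝ)..((k:ℝ)+1), Q 1 t)
        = ∫ t in (k:ℝ)..((k:ℝ)+1), (lam ^ (k+1) / (1-lam)) := by
      apply intervalIntegral.integral_congr_ae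
      rw [MeasureTheory.ae_iff]
      refine measure_mono_null ?_ (measure_singleton ((k:ℝ)+1))
      intro x hx
      simp only [Set.mem_setOf_eq, Classical.not_imp] at hx
      obtain ⟨hmem, hne'⟩ := hx
      rw [Set.uIoc_of_le (by linarith)] at hmem
      by_contra hxx
      simp only [Set.mem_singleton_iff] at hxx
      have hlt : x < (k:ℝ)+1 := lt_of_le_of_ne hmem.2 hxx
      have hfl : ⌊x⌋ = (k:ℤ) := by
        rw [Int.floor_eq_iff]
        constructor
        · push_cast; exact hmem.1.le
        · push_cast; linarith
      apply hne'
      rw [hQ1, hfl, show ((k:ℤ)+1) = ((k+1:ℕ):ℤ) by push_cast; ring, zpow_natCast]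
    rw [hcong, intervalIntegral.integral_const]
    simp
  have avg1 : (∫ t in (0:ℝ)..(N:ℝ), Q 1 t) = 0 := by
    have hsum : (∫ t in (0:ℝ)..(N:ℝ), Q 1 t)
        = ∑ k ∈ Finset.range N, lam ^ (k+1) / (1 - lam) := by
      rw [show (0:ℝ) = ((0:ℕ):ℝ) by norm_num,
        ← intervalIntegral.sum_integral_adjacent_intervals (a := fun k : ℕ => (k:ℝ)) (n := N)
        (fun k _ => int1 _ _)]
      apply Finset.sum_congr rfl
      intro k _
      rw [← hstep k]
      norm_num
    rw [hsum, ← Finset.sum_div]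
    have : ∑ k ∈ Finset.range N, lam ^ (k+1) = lam * ((lam ^ N - 1)/(lam - 1)) := by
      rw [← geom_sum_eq hlam, Finset.mul_sum]
      exact Finset.sum_congr rfl fun k _ => by ring
    rw [this, hroot]
    simp
  have per1 : Function.Periodic (Q 1) (N:ℝ) := by
    intro x
    rw [hQ1, hQ1]
    rw [show ((N:ℝ)) = ((N:ℤ):ℝ) by push_cast; ring, Int.floor_add_intCast]
    rw [show (⌊x⌋ + (N:ℤ) + 1) = (⌊x⌋ + 1) + (N:ℤ) by ring, zpow_add₀ hlam0,
      zpow_natCast, hroot, mul_one]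
  intro j hj
  induction j, hj using Nat.le_induction with
  | base => exact ⟨per1, avg1, int1⟩
  | succ j hj ih =>
    obtain ⟨perj, avgj, intj⟩ := ih
    have h2 : 2 ≤ j + 1 := by omega
    have intj1 : ∀ a b : ℝ, IntervalIntegrable (Q (j+1)) volume a b :=
      fun a b => (hQcont _ h2).intervalIntegrable _ _
    refine ⟨?_, hQavg _ h2, intj1⟩
    intro x
    have e1 := hQprim (j+1) h2 (x + N)
    have e2 := hQprim (j+1) h2 x
    simp only [Nat.add_sub_cancel] at e1 e2
    rw [e1, e2]
    have hsplit : (∫ t in (0:ℝ)..(x + (N:ℝ)), Q j t)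
        = (∫ t in (0:ℝ)..x, Q j t) + ∫ t in x..(x + (N:ℝ)), Q j t :=
      (intervalIntegral.integral_add_adjacent_intervals (intj 0 x) (intj x _)).symm
    rw [hsplit, perj.intervalIntegral_add_eq x 0]
    rw [zero_add, avgj]
    ring

lemma floor_neg_of_notint {x : ℝ} (hx : x ∉ Set.range ((↑) : ℤ → ℝ)) : ⌊-x⌋ = -⌊x⌋ - 1 := by
  have h1 : (⌊x⌋ : ℝ) < x := lt_of_le_of_ne (Int.floor_le x) (fun h => hx ⟨⌊x⌋, h⟩)
  have h2 : x < ⌊x⌋ + 1 := Int.lt_floor_add_one x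
  rw [Int.floor_eq_iff]
  constructor <;> push_cast <;> linarith

/-- **Symmetry of the twisted Euler–Maclaurin polynomials:**
for a root of unity `λ ≠ 1` of order `N` (so that `1/λ` is also a root of unity `≠ 1`),
`q ∈ ℂ` and an integer `m ≥ 1`, we have `N_{1-q}^{m,1/λ}(S) = N_q^{m,λ}(-S)`.
Here `Q` is the family `Q_{·,λ}` and `Q'` is the family `Q_{·,1/λ}`, characterized by
`Q_{1,λ}(x) = λ^{⌊x⌋+1}/(1-λ)` and, for `j ≥ 2`, `Q_{j,λ}` continuous with
`Q_{j,λ}(x) = Q_{j,λ}(0) + ∫₀ˣ Q_{j-1,λ}` and `∫₀ᴺ Q_{j,λ} = 0`. -/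
theorem twistPoly_symmetry
    (N : ℕ) (hN : 0 < N) (lam : ℂ) (hroot : lam ^ N = 1) (hlam : lam ≠ 1)
    (Q Q' : ℕ → ℝ → ℂ)
    (hQ1 : ∀ x : ℝ, Q 1 x = lam ^ (⌊x⌋ + 1) / (1 - lam))
    (hQcont : ∀ j, 2 ≤ j → Continuous (Q j))
    (hQprim : ∀ j, 2 ≤ j → ∀ x : ℝ, Q j x = Q j 0 + ∫ t in (0 : ℝ)..x, Q (j - 1) t)
    (hQavg : ∀ j, 2 ≤ j → (∫ t in (0 : ℝ)..(N : ℝ), Q j t) = 0)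
    (hQ'1 : ∀ x : ℝ, Q' 1 x = lam⁻¹ ^ (⌊x⌋ + 1) / (1 - lam⁻¹))
    (hQ'cont : ∀ j, 2 ≤ j → Continuous (Q' j))
    (hQ'prim : ∀ j, 2 ≤ j → ∀ x : ℝ, Q' j x = Q' j 0 + ∫ t in (0 : ℝ)..x, Q' (j - 1) t)
    (hQ'avg : ∀ j, 2 ≤ j → (∫ t in (0 : ℝ)..(N : ℝ), Q' j t) = 0)
    (q : ℂ) (m : ℕ) (hm : 1 ≤ m) :
    twistPoly (1 - q) lam⁻¹ Q' m = (twistPoly q lam Q m).comp (-Polynomial.X) := by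
  have hlam0 : lam ≠ 0 := fun h => by rw [h] at hroot; simp [zero_pow hN.ne'] at hroot
  have hne : (1:ℂ) - lam ≠ 0 := sub_ne_zero.mpr (Ne.symm hlam)
  have hinv1 : lam⁻¹ ≠ 1 := fun h => hlam (by rw [← inv_inv lam, h, inv_one])
  have hne' : (1:ℂ) - lam⁻¹ ≠ 0 := sub_ne_zero.mpr (Ne.symm hinv1)
  have hauxQ := twistAux N hN lam hroot hlam Q hQ1 hQcont hQprim hQavg
  -- a.e. relation at level 1
  have hae1 : ∀ᵐ x : ℝ, Q' 1 x = (-1:ℂ)^1 * Q 1 (-x) := by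
    have hnull : volume (Set.range ((↑) : ℤ → ℝ)) = 0 :=
      (Set.countable_range _).measure_zero _
    rw [MeasureTheory.ae_iff]
    refine measure_mono_null ?_ hnull
    intro x hx
    simp only [Set.mem_setOf_eq] at hx
    by_contra hmem
    apply hx
    rw [hQ'1, hQ1, floor_neg_of_notint hmem]
    rw [inv_zpow, ← zpow_neg]
    rw [show (-⌊x⌋ - 1 + 1 : ℤ) = -(⌊x⌋+1) + 1 by ring, zpow_add₀ hlam0, zpow_one]
    set a := lam ^ (-(⌊x⌋+1) : ℤ)
    field_simp [sub_ne_zero.mpr hlam]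
    ring
  -- pointwise step
  have step : ∀ j, 2 ≤ j → (∀ᵐ x : ℝ, Q' (j-1) x = (-1:ℂ)^(j-1) * Q (j-1) (-x)) →
      ∀ x : ℝ, Q' j x = (-1:ℂ)^j * Q j (-x) := by
    intro j hj hprev
    have hQjper := (hauxQ j (by omega)).1
    have hpow : (-1:ℂ)^j = -(-1:ℂ)^(j-1) := by
      rw [show j = (j-1)+1 by omega, pow_succ]
      simp
    have hconst : ∀ x : ℝ, Q' j x - (-1:ℂ)^j * Q j (-x) = Q' j 0 - (-1:ℂ)^j * Q j 0 := by
      intro x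
      have hint : (∫ t in (0:ℝ)..x, Q' (j-1) t)
          = ∫ t in (0:ℝ)..x, (-1:ℂ)^(j-1) * Q (j-1) (-t) := by
        apply intervalIntegral.integral_congr_ae
        filter_upwards [hprev] with t ht _
        exact ht
      have hcomp : (∫ t in (0:ℝ)..x, Q (j-1) (-t)) = ∫ t in (-x)..(0:ℝ), Q (j-1) t := by
        simpa using intervalIntegral.integral_comp_neg (a := 0) (b := x) (f := Q (j-1))
      rw [hQ'prim j hj x, hQprim j hj (-x)]
      rw [hint, intervalIntegral.integral_const_mul, hcomp]
      rw [intervalIntegral.integral_symm (-x) 0]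
      rw [hpow]
      ring
    have hc0 : Q' j 0 - (-1:ℂ)^j * Q j 0 = 0 := by
      have h1 : (∫ t in (0:ℝ)..(N:ℝ), Q' j t) = 0 := hQ'avg j hj
      have h3 : (∫ t in (0:ℝ)..(N:ℝ), Q j (-t)) = 0 := by
        rw [intervalIntegral.integral_comp_neg, neg_zero,
          show (0:ℝ) = (-(N:ℝ)) + (N:ℝ) by ring,
          hQjper.intervalIntegral_add_eq (-(N:ℝ)) 0, zero_add, hQavg j hj]
      have h2 : (∫ t in (0:ℝ)..(N:ℝ), Q' j t)
          = (-1:ℂ)^j * (∫ t in (0:ℝ)..(N:ℝ), Q j (-t))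
            + ((N:ℝ) - 0) • (Q' j 0 - (-1:ℂ)^j * Q j 0) := by
        rw [intervalIntegral.integral_congr
          (g := fun t => (-1:ℂ)^j * Q j (-t) + (Q' j 0 - (-1:ℂ)^j * Q j 0))
          (fun t _ => by have := hconst t; linear_combination this)]
        have hic : Continuous (fun t : ℝ => (-1:ℂ)^j * Q j (-t)) :=
          continuous_const.mul ((hQcont j hj).comp continuous_neg)
        rw [intervalIntegral.integral_add (hic.intervalIntegrable _ _)
          intervalIntegrable_const,
          intervalIntegral.integral_const_mul, intervalIntegral.integral_const]
      rw [h1, h3, mul_zero, zero_add, sub_zero] at h2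
      have hNne : (((N:ℝ) : ℂ)) ≠ 0 := by
        simp [hN.ne']
      rw [Complex.real_smul] at h2
      rcases mul_eq_zero.mp h2.symm with h | h
      · exact absurd h hNne
      · exact h
    intro x
    have := hconst x
    rw [hc0, sub_eq_zero] at this
    exact this
  have key : ∀ j, 2 ≤ j → ∀ x : ℝ, Q' j x = (-1:ℂ)^j * Q j (-x) := by
    intro j hj
    induction j, hj using Nat.le_induction with
    | base => exact step 2 le_rfl (by simpa using hae1)
    | succ j hj ih =>
      apply step (j+1) (by omega)
      simp only [Nat.add_sub_cancel]
      exact Filter.Eventually.of_forall ih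
  -- polynomial assembly
  have hc : (1 - q) + lam⁻¹ / (1 - lam⁻¹) = -(q + lam / (1 - lam)) := by
    field_simp [sub_ne_zero.mpr hlam]
    ring
  unfold twistPoly
  rw [Polynomial.add_comp, Polynomial.mul_comp, Polynomial.C_comp, Polynomial.X_comp,
    Polynomial.sum_comp, hc]
  congr 1
  · rw [map_neg]
    ring
  · apply Finset.sum_congr rfl
    intro j hj
    have h2 : 2 ≤ j := (Finset.mem_Icc.1 hj).1
    rw [Polynomial.mul_comp, Polynomial.C_comp, Polynomial.pow_comp, Polynomial.X_comp]
    rw [show Q' j 0 = (-1:ℂ)^j * Q j 0 by simpa using key j h2 0]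
    rw [map_mul, map_pow, map_neg, map_one]
    ring
end
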